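/- arXiv:2202.11031 — 4 statements merged into one kernel-verified Lean document; each statement's English description precedes it below -/
import Mathlib

section
/- Suppose (i) for every θ ∈ Θ the map x ↦ g(x,θ) is continuous and increasing on ℝ; (ii) Lebesgue measure μ on ℝ is absolutely continuous with respect to ν; (iii) Θ is compact; and (iv) for every bounded continuous function f : ℝ → ℝ, the map θ ↦ f(g(·,θ)) is continuous from Θ into L²(ν), i.e. for every θ₀ ∈ Θ and every ε > 0 there exists δ > 0 such that ∫_ℝ (f(g(x,θ)) − f(g(x,θ₀)))² dν(x) < ε whenever θ ∈ Θ and ‖θ − θ₀‖₂ < δ. Then there exists θ ∈ Θ with F(x) = G(g(x,θ)) for all x ∈ ℝ if and only if inf_{θ∈Θ} ∫_ℝ (F(x) − G(g(x,θ)))² dν(x) = 0. -/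
/-!
If `F = G ∘ g(·, θ)` the integrand vanishes at `θ`, so the infimum is `0`. Conversely, since `F`
and `G` take values in `[0, 1]`, `|(F - a)² - (F - b)²| ≤ 2 |a - b|` pointwise, so the
squared `L²(ν)` distance `θ ↦ ∫ (F - G ∘ g(·, θ))² dν` inherits the `L²(ν)` continuity of
`θ ↦ G ∘ g(·, θ)`. On the compact set `Θ` it attains its infimum `0`, hence `F = G ∘ g(·, θ)`
`ν`-almost everywhere, hence Lebesgue-almost everywhere, hence everywhere by continuity.
-/

open MeasureTheory Filter Topology Set

lemma Monotone.mem_Icc_of_tendsto {f : ℝ → ℝ} (hf : Monotone f)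
    (hbot : Tendsto f atBot (𝓝 0)) (htop : Tendsto f atTop (𝓝 1)) (x : ℝ) :
    f x ∈ Icc 0 1 :=
  ⟨hf.le_of_tendsto hbot x, hf.ge_of_tendsto htop x⟩

lemma abs_sq_sub_sub_sq_sub_le {s a b : ℝ} (hs : s ∈ Icc 0 1) (ha : a ∈ Icc 0 1)
    (hb : b ∈ Icc 0 1) {c : ℝ} (hc : 0 < c) :
    |(s - a) ^ 2 - (s - b) ^ 2| ≤ (a - b) ^ 2 / c + c := by
  have hfactor : |(s - a) ^ 2 - (s - b) ^ 2| ≤ 2 * |a - b| := by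
    rw [show (s - a) ^ 2 - (s - b) ^ 2 = (b - a) * (2 * s - a - b) by ring, abs_mul,
      abs_sub_comm, mul_comm]
    gcongr
    rw [abs_le]
    constructor <;> linarith [hs.1, hs.2, ha.1, ha.2, hb.1, hb.2]
  -- AM-GM: `2 c |a - b| ≤ (a - b)² + c²`
  have hamgm : 2 * |a - b| ≤ (a - b) ^ 2 / c + c := by
    rw [div_add' _ _ _ hc.ne', le_div_iff₀ hc, ← sq_abs (a - b)]
    nlinarith [two_mul_le_add_sq |a - b| c]
  exact hfactor.trans hamgm

section SquaredDistance

variable {α : Type*} [MeasurableSpace α] {ν : Measure α}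

lemma integrable_sq_sub_of_mem_Icc [IsFiniteMeasure ν] {f u : α → ℝ}
    (hf_meas : AEStronglyMeasurable f ν) (hu_meas : AEStronglyMeasurable u ν)
    (hf : ∀ x, f x ∈ Icc 0 1) (hu : ∀ x, u x ∈ Icc 0 1) :
    Integrable (fun x => (f x - u x) ^ 2) ν := by
  refine .of_bound ((hf_meas.sub hu_meas).pow 2) 1 (ae_of_all _ fun x => ?_)
  rw [Real.norm_eq_abs, abs_pow, sq_le_one_iff_abs_le_one, abs_abs, abs_le]
  constructor <;> linarith [(hf x).1, (hf x).2, (hu x).1, (hu x).2]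

lemma abs_integral_sq_sub_sub_integral_sq_sub_le [IsProbabilityMeasure ν] {f u v : α → ℝ}
    (hf_meas : AEStronglyMeasurable f ν) (hu_meas : AEStronglyMeasurable u ν)
    (hv_meas : AEStronglyMeasurable v ν) (hf : ∀ x, f x ∈ Icc 0 1)
    (hu : ∀ x, u x ∈ Icc 0 1) (hv : ∀ x, v x ∈ Icc 0 1) {c : ℝ} (hc : 0 < c) :
    |∫ x, (f x - u x) ^ 2 ∂ν - ∫ x, (f x - v x) ^ 2 ∂ν| ≤
      (∫ x, (u x - v x) ^ 2 ∂ν) / c + c := by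
  have hfu := integrable_sq_sub_of_mem_Icc hf_meas hu_meas hf hu
  have hfv := integrable_sq_sub_of_mem_Icc hf_meas hv_meas hf hv
  have huv := integrable_sq_sub_of_mem_Icc hu_meas hv_meas hu hv
  calc |∫ x, (f x - u x) ^ 2 ∂ν - ∫ x, (f x - v x) ^ 2 ∂ν|
      = |∫ x, ((f x - u x) ^ 2 - (f x - v x) ^ 2) ∂ν| := by rw [integral_sub hfu hfv]
    _ ≤ ∫ x, |(f x - u x) ^ 2 - (f x - v x) ^ 2| ∂ν := abs_integral_le_integral_abs
    _ ≤ ∫ x, ((u x - v x) ^ 2 / c + c) ∂ν :=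
        integral_mono (hfu.sub hfv).abs (huv.div_const c |>.add (integrable_const c))
          fun x => abs_sq_sub_sub_sq_sub_le (hf x) (hu x) (hv x) hc
    _ = (∫ x, (u x - v x) ^ 2 ∂ν) / c + c := by
        rw [integral_add (huv.div_const c) (integrable_const c), integral_div, integral_const,
          probReal_univ, one_smul]

lemma continuousOn_integral_sq_sub [IsProbabilityMeasure ν] {X : Type*} [TopologicalSpace X]
    {Θ : Set X} {f : α → ℝ} {u : X → α → ℝ} (hf_meas : AEStronglyMeasurable f ν)
    (hu_meas : ∀ θ ∈ Θ, AEStronglyMeasurable (u θ) ν) (hf : ∀ x, f x ∈ Icc 0 1)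
    (hu : ∀ θ ∈ Θ, ∀ x, u θ x ∈ Icc 0 1)
    (hL2 : ∀ θ₀ ∈ Θ, Tendsto (fun θ => ∫ x, (u θ x - u θ₀ x) ^ 2 ∂ν) (𝓝[Θ] θ₀) (𝓝 0)) :
    ContinuousOn (fun θ => ∫ x, (f x - u θ x) ^ 2 ∂ν) Θ := by
  intro θ₀ hθ₀
  rw [ContinuousWithinAt, Metric.tendsto_nhds]
  intro ε hε
  have hc : 0 < ε / 2 := half_pos hε
  filter_upwards [self_mem_nhdsWithin, (hL2 θ₀ hθ₀).eventually (gt_mem_nhds (pow_pos hc 2))]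
    with θ hθ hclose
  rw [Real.dist_eq]
  calc _ ≤ (∫ x, (u θ x - u θ₀ x) ^ 2 ∂ν) / (ε / 2) + ε / 2 :=
        abs_integral_sq_sub_sub_integral_sq_sub_le hf_meas (hu_meas θ hθ) (hu_meas θ₀ hθ₀) hf
          (hu θ hθ) (hu θ₀ hθ₀) hc
    _ < (ε / 2) ^ 2 / (ε / 2) + ε / 2 := by gcongr
    _ = ε := by field_simp; ring

lemma ae_eq_of_integral_sq_sub_eq_zero {f u : α → ℝ}
    (hint : Integrable (fun x => (f x - u x) ^ 2) ν) (hzero : ∫ x, (f x - u x) ^ 2 ∂ν = 0) :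
    f =ᵐ[ν] u := by
  filter_upwards [(integral_eq_zero_iff_of_nonneg (fun x => sq_nonneg _) hint).1 hzero]
    with x hx
  exact sub_eq_zero.1 (pow_eq_zero_iff two_ne_zero |>.1 hx)

end SquaredDistance

theorem stmt_0_general
    (d : ℕ)
    (Θ : Set (EuclideanSpace ℝ (Fin d))) (hΘne : Θ.Nonempty)
    (g : ℝ → EuclideanSpace ℝ (Fin d) → ℝ)
    (ν : Measure ℝ) [IsProbabilityMeasure ν]
    (F G : ℝ → ℝ)
    -- F is a continuous CDF
    (hFcont : Continuous F) (hFmono : Monotone F)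
    (hFbot : Tendsto F atBot (𝓝 0)) (hFtop : Tendsto F atTop (𝓝 1))
    -- G is a continuous CDF
    (hGcont : Continuous G) (hGmono : Monotone G)
    (hGbot : Tendsto G atBot (𝓝 0)) (hGtop : Tendsto G atTop (𝓝 1))
    -- (i) for every θ ∈ Θ, x ↦ g(x,θ) is continuous and increasing
    (hg_cont : ∀ θ ∈ Θ, Continuous fun x => g x θ)
    -- (ii) Lebesgue measure is absolutely continuous with respect to ν
    (hac : (volume : Measure ℝ) ≪ ν)
    -- (iii) Θ is compact
    (hΘcomp : IsCompact Θ)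
    -- (iv) for every bounded continuous f, θ ↦ f(g(·,θ)) is continuous from Θ to L²(ν)
    (hL2cont : ∀ f : ℝ → ℝ, Continuous f → (∃ M, ∀ x, |f x| ≤ M) →
      ∀ θ₀ ∈ Θ, ∀ ε > 0, ∃ δ > 0, ∀ θ ∈ Θ, ‖θ - θ₀‖ < δ →
        ∫ x, (f (g x θ) - f (g x θ₀)) ^ 2 ∂ν < ε) :
    (∃ θ ∈ Θ, ∀ x : ℝ, F x = G (g x θ)) ↔
      sInf ((fun θ => ∫ x, (F x - G (g x θ)) ^ 2 ∂ν) '' Θ) = 0 := by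
  set h := fun θ => ∫ x, (F x - G (g x θ)) ^ 2 ∂ν
  have hF := hFmono.mem_Icc_of_tendsto hFbot hFtop
  have hG := hGmono.mem_Icc_of_tendsto hGbot hGtop
  have hGg_meas θ (hθ : θ ∈ Θ) : AEStronglyMeasurable (fun x => G (g x θ)) ν :=
    (hGcont.comp (hg_cont θ hθ)).aestronglyMeasurable
  constructor
  · rintro ⟨θ, hθ, hFG⟩
    refine IsLeast.csInf_eq ⟨⟨θ, hθ, by simp [h, hFG]⟩, ?_⟩
    rintro _ ⟨θ', -, rfl⟩
    exact integral_nonneg fun x => sq_nonneg _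
  · intro hinf
    have hG_bdd : ∃ M, ∀ y, |G y| ≤ M := ⟨1, fun y => abs_le.2 ⟨by linarith [(hG y).1], (hG y).2⟩⟩
    have hcont : ContinuousOn h Θ := by
      refine continuousOn_integral_sq_sub hFcont.aestronglyMeasurable hGg_meas hF
        (fun θ _ x => hG (g x θ)) fun θ₀ hθ₀ => Metric.tendsto_nhdsWithin_nhds.2 fun ε hε => ?_
      obtain ⟨δ, hδ, hclose⟩ := hL2cont G hGcont hG_bdd θ₀ hθ₀ ε hε
      refine ⟨δ, hδ, fun θ hθ hdist => ?_⟩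
      rw [Real.dist_0_eq_abs, abs_of_nonneg (integral_nonneg fun x => sq_nonneg _)]
      exact hclose θ hθ (by rwa [← dist_eq_norm])
    obtain ⟨θ, hθ, hθ0⟩ : 0 ∈ h '' Θ :=
      hinf ▸ (hΘcomp.image_of_continuousOn hcont).sInf_mem (hΘne.image h)
    have hae : F =ᵐ[ν] fun x => G (g x θ) := ae_eq_of_integral_sq_sub_eq_zero
      (integrable_sq_sub_of_mem_Icc hFcont.aestronglyMeasurable (hGg_meas θ hθ) hF
        fun x => hG (g x θ)) hθ0
    have hFG := (hFcont.ae_eq_iff_eq volume (hGcont.comp (hg_cont θ hθ))).1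
      (hae.filter_mono hac.ae_le)
    exact ⟨θ, hθ, congrFun hFG⟩

/-- Proposition 1 of the paper: equivalent characterization of the
null hypothesis that `F = G ∘ g(·,θ)` for some nuisance parameter `θ ∈ Θ`. -/
theorem stmt_0
    (d : ℕ) (hd : 1 ≤ d)
    (Θ : Set (EuclideanSpace ℝ (Fin d))) (hΘne : Θ.Nonempty)
    (g : ℝ → EuclideanSpace ℝ (Fin d) → ℝ)
    (ν : Measure ℝ) [IsProbabilityMeasure ν]
    (F G : ℝ → ℝ)
    -- F is a continuous CDF
    (hFcont : Continuous F) (hFmono : Monotone F)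
    (hFbot : Tendsto F atBot (𝓝 0)) (hFtop : Tendsto F atTop (𝓝 1))
    -- G is a continuous CDF
    (hGcont : Continuous G) (hGmono : Monotone G)
    (hGbot : Tendsto G atBot (𝓝 0)) (hGtop : Tendsto G atTop (𝓝 1))
    -- (i) for every θ ∈ Θ, x ↦ g(x,θ) is continuous and increasing
    (hg_cont : ∀ θ ∈ Θ, Continuous fun x => g x θ)
    (hg_mono : ∀ θ ∈ Θ, StrictMono fun x => g x θ)
    -- (ii) Lebesgue measure is absolutely continuous with respect to ν
    (hac : (volume : Measure ℝ) ≪ ν)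
    -- (iii) Θ is compact
    (hΘcomp : IsCompact Θ)
    -- (iv) for every bounded continuous f, θ ↦ f(g(·,θ)) is continuous from Θ to L²(ν)
    (hL2cont : ∀ f : ℝ → ℝ, Continuous f → (∃ M, ∀ x, |f x| ≤ M) →
      ∀ θ₀ ∈ Θ, ∀ ε > 0, ∃ δ > 0, ∀ θ ∈ Θ, ‖θ - θ₀‖ < δ →
        ∫ x, (f (g x θ) - f (g x θ₀)) ^ 2 ∂ν < ε) :
    (∃ θ ∈ Θ, ∀ x : ℝ, F x = G (g x θ)) ↔
      sInf ((fun θ => ∫ x, (F x - G (g x θ)) ^ 2 ∂ν) '' Θ) = 0 :=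
  stmt_0_general d Θ hΘne g ν F G hFcont hFmono hFbot hFtop hGcont hGmono hGbot hGtop hg_cont hac
    hΘcomp hL2cont
end

section
/- Let ν be a Borel probability measure on ℝ and Θ ⊆ ℝ^d nonempty and compact. Let φ, h : ℝ × Θ → ℝ be bounded functions that are L²(ν)-continuous in θ (for every θ₀ ∈ Θ and ε > 0 there is δ > 0 with ∫(ψ(x,θ) − ψ(x,θ₀))² dν(x) < ε whenever ‖θ − θ₀‖₂ < δ, for ψ = φ and ψ = h). Define L(ψ) = inf_{θ∈Θ} ∫_ℝ ψ(x,θ)² dν(x) and let Θ₀(φ) = argmin_{θ∈Θ} ∫_ℝ φ(x,θ)² dν(x), which is nonempty. Then for every sequence of positive reals t_n → 0 and every sequence of bounded functions h_n : ℝ × Θ → ℝ with ‖h_n − h‖∞ → 0, lim_{n→∞} ( L(φ + t_n h_n) − L(φ) )/t_n = 2 · inf_{θ∈Θ₀(φ)} ∫_ℝ φ(x,θ) h(x,θ) dν(x). -/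
/-!
Write `F θ = ∫ φ(x,θ)² dν` and `D θ = 2 ∫ φ(x,θ) h(x,θ) dν`. L²(ν)-continuity in `θ` makes `F` and
`D` continuous on the compact set `Θ`, and expanding the square shows that
`(∫ (φ + tₙ hₙ)² dν - F) / tₙ → D` uniformly on `Θ`. The theorem is then a Danskin-type statement:
if `Gₙ = F + tₙ D + o(tₙ)` uniformly on `Θ`, then `(inf Gₙ - inf F) / tₙ → inf_{Θ₀} D`. Evaluating
at points of `Θ₀` gives the upper bound. For the lower bound, a minimiser of `F + t D` has `F`-value
within `O(t)` of `inf F`, and by compactness all such near-minimisers of `F` have `D`-value at least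
`inf_{Θ₀} D - η`.
-/

open MeasureTheory Filter Topology Set ProbabilityTheory
open scoped ENNReal

lemma IsMinOn.csInf_image_eq {α β : Type*} [ConditionallyCompleteLattice β] {f : α → β}
    {s : Set α} {a : α} (h : IsMinOn f s a) (ha : a ∈ s) : sInf (f '' s) = f a :=
  IsLeast.csInf_eq ⟨mem_image_of_mem f ha, forall_mem_image.2 fun _ hx => h hx⟩

lemma abs_sInf_image_sub_sInf_image_le {α : Type*} {s : Set α} {f g : α → ℝ} {c : ℝ}
    (hs : s.Nonempty) (hg : BddBelow (g '' s)) (hfg : ∀ x ∈ s, |f x - g x| ≤ c) :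
    |sInf (f '' s) - sInf (g '' s)| ≤ c := by
  obtain ⟨b, hb⟩ := hg
  have hb' : ∀ x ∈ s, b ≤ g x := fun x hx => hb (mem_image_of_mem g hx)
  have hf : BddBelow (f '' s) := ⟨b - c, forall_mem_image.2 fun x hx => by
    linarith [hb' x hx, (abs_le.1 (hfg x hx)).1]⟩
  have hfx : ∀ x ∈ s, sInf (f '' s) ≤ f x := fun x hx => csInf_le hf (mem_image_of_mem f hx)
  have hgx : ∀ x ∈ s, sInf (g '' s) ≤ g x := fun x hx => csInf_le ⟨b, hb⟩ (mem_image_of_mem g hx)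
  have hgf : sInf (g '' s) - c ≤ sInf (f '' s) := le_csInf (hs.image f) <|
    forall_mem_image.2 fun x hx => by linarith [hgx x hx, (abs_le.1 (hfg x hx)).1]
  have hfg' : sInf (f '' s) - c ≤ sInf (g '' s) := le_csInf (hs.image g) <|
    forall_mem_image.2 fun x hx => by linarith [hfx x hx, (abs_le.1 (hfg x hx)).2]
  exact abs_le.2 ⟨by linarith, by linarith⟩

lemma Real.sInf_image_const_mul {α : Type*} {c : ℝ} (hc : 0 ≤ c) (f : α → ℝ) (s : Set α) :
    sInf ((fun x => c * f x) '' s) = c * sInf (f '' s) := by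
  rw [← smul_eq_mul, ← Real.sInf_smul_of_nonneg hc, ← image_smul, image_image]
  rfl

section Danskin

variable {E : Type*} [TopologicalSpace E] {Θ : Set E} {F D : E → ℝ}

lemma IsCompact.exists_pos_forall_sub_lt_of_lt_add (hΘ : IsCompact Θ) (hF : ContinuousOn F Θ)
    (hD : ContinuousOn D Θ) {a L η : ℝ} (hL : ∀ θ ∈ Θ, L ≤ F θ)
    (ha : ∀ θ ∈ Θ, IsMinOn F Θ θ → a ≤ D θ) (hη : 0 < η) :
    ∃ ρ > 0, ∀ θ ∈ Θ, F θ < L + ρ → a - η < D θ := by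
  set K := Θ ∩ D ⁻¹' Iic (a - η)
  rcases K.eq_empty_or_nonempty with hK | hK
  · refine ⟨1, one_pos, fun θ hθ _ => not_le.1 fun hDθ => ?_⟩
    exact hK.subset ⟨hθ, hDθ⟩
  obtain ⟨θ', ⟨hθ'Θ, hθ'D⟩, hθ'min⟩ :=
    (hD.lowerSemicontinuousOn.isCompact_inter_preimage_Iic hΘ (a - η)).exists_isMinOn hK
      (hF.mono inter_subset_left)
  have hθ' : ¬IsMinOn F Θ θ' := fun h => by linarith [ha θ' hθ'Θ h, show D θ' ≤ a - η from hθ'D]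
  obtain ⟨ϑ, hϑ, hFϑ⟩ : ∃ ϑ ∈ Θ, F ϑ < F θ' := by
    simpa [isMinOn_iff] using hθ'
  refine ⟨F θ' - L, by linarith [hL ϑ hϑ], fun θ hθ hFθ => not_le.1 fun hDθ => ?_⟩
  linarith [show F θ' ≤ F θ from hθ'min ⟨hθ, hDθ⟩]

theorem IsCompact.tendsto_sInf_image_add_mul_sub_div (hΘ : IsCompact Θ) (hne : Θ.Nonempty)
    (hF : ContinuousOn F Θ) (hD : ContinuousOn D Θ) :
    Tendsto (fun s => (sInf ((fun θ => F θ + s * D θ) '' Θ) - sInf (F '' Θ)) / s) (𝓝[>] 0)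
      (𝓝 (sInf (D '' {θ ∈ Θ | IsMinOn F Θ θ}))) := by
  set A := sInf (D '' {θ ∈ Θ | IsMinOn F Θ θ})
  obtain ⟨θ₀, hθ₀, hmin⟩ := hΘ.exists_isMinOn hne hF
  rw [hmin.csInf_image_eq hθ₀]
  have hFmin : ∀ θ ∈ Θ, IsMinOn F Θ θ → F θ = F θ₀ := fun θ hθ h => le_antisymm (h hθ₀) (hmin hθ)
  have hA : ∀ θ ∈ Θ, IsMinOn F Θ θ → A ≤ D θ := fun θ hθ h =>
    csInf_le ((hΘ.bddBelow_image hD).mono (image_mono (sep_subset Θ _))) ⟨θ, ⟨hθ, h⟩, rfl⟩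
  have hcont : ∀ s, ContinuousOn (fun θ => F θ + s * D θ) Θ := fun s =>
    hF.add (continuousOn_const.mul hD)
  have upper : ∀ s > 0, (sInf ((fun θ => F θ + s * D θ) '' Θ) - F θ₀) / s ≤ A := by
    intro s hs
    refine le_csInf (Set.Nonempty.image D ⟨θ₀, hθ₀, hmin⟩) (forall_mem_image.2 ?_)
    rintro θ ⟨hθ, hθmin⟩
    rw [div_le_iff₀ hs]
    linarith [csInf_le (hΘ.bddBelow_image (hcont s)) (mem_image_of_mem _ hθ), hFmin θ hθ hθmin]
  refine tendsto_order.2 ⟨fun b hb => ?_, fun b hb => ?_⟩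
  · obtain ⟨ρ, hρ, hgap⟩ := hΘ.exists_pos_forall_sub_lt_of_lt_add hF hD (fun θ hθ => hmin hθ) hA
      (sub_pos.2 hb)
    obtain ⟨θd, hθd, hDmin⟩ := hΘ.exists_isMinOn hne hD
    have hsmall : ∀ᶠ s in 𝓝[>] (0 : ℝ), s * (A - D θd) < ρ := by
      refine nhdsWithin_le_nhds (((continuous_id.mul continuous_const).tendsto' 0 0 ?_).eventually
        (gt_mem_nhds hρ))
      simp
    filter_upwards [hsmall, self_mem_nhdsWithin] with s hsρ (hs : 0 < s)
    obtain ⟨θs, hθs, hsmin⟩ := hΘ.exists_isMinOn hne (hcont s)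
    have hup := upper s hs
    rw [hsmin.csInf_image_eq hθs, div_le_iff₀ hs] at hup
    rw [hsmin.csInf_image_eq hθs, lt_div_iff₀ hs]
    have hFθs : F θs < F θ₀ + ρ := by
      nlinarith [show D θd ≤ D θs from hDmin hθs]
    have := mul_lt_mul_of_pos_left (hgap θs hθs hFθs) hs
    nlinarith [show F θ₀ ≤ F θs from hmin hθs]
  · exact Eventually.mono self_mem_nhdsWithin fun s (hs : 0 < s) => (upper s hs).trans_lt hb

theorem IsCompact.tendsto_sInf_image_sub_div {ι : Type*} {l : Filter ι} (hΘ : IsCompact Θ)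
    (hne : Θ.Nonempty) (hF : ContinuousOn F Θ) (hD : ContinuousOn D Θ) {t : ι → ℝ}
    (ht : Tendsto t l (𝓝[>] 0)) {G : ι → E → ℝ}
    (hG : TendstoUniformlyOn (fun i θ => (G i θ - F θ) / t i) D l Θ) :
    Tendsto (fun i => (sInf (G i '' Θ) - sInf (F '' Θ)) / t i) l
      (𝓝 (sInf (D '' {θ ∈ Θ | IsMinOn F Θ θ}))) := by
  have hlim := (hΘ.tendsto_sInf_image_add_mul_sub_div hne hF hD).comp ht
  refine Metric.tendsto_nhds.2 fun ε hε => ?_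
  filter_upwards [Metric.tendsto_nhds.1 hlim (ε / 2) (half_pos hε),
    Metric.tendstoUniformlyOn_iff.1 hG (ε / 2) (half_pos hε), ht self_mem_nhdsWithin]
    with i hi hGi (hti : 0 < t i)
  have hclose : |sInf (G i '' Θ) - sInf ((fun θ => F θ + t i * D θ) '' Θ)| ≤ t i * (ε / 2) := by
    refine abs_sInf_image_sub_sInf_image_le hne
      (hΘ.bddBelow_image (hF.add (continuousOn_const.mul hD))) fun θ hθ => ?_
    have hθ := hGi θ hθ
    rw [Real.dist_eq, abs_sub_comm] at hθ
    calc |G i θ - (F θ + t i * D θ)| = t i * |(G i θ - F θ) / t i - D θ| := by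
          rw [← abs_of_pos hti, ← abs_mul, abs_of_pos hti]
          congr 1
          field_simp
          ring
      _ ≤ t i * (ε / 2) := by gcongr
  rw [Real.dist_eq] at hi ⊢
  calc _ ≤ |(sInf (G i '' Θ) - sInf (F '' Θ)) / t i -
          (sInf ((fun θ => F θ + t i * D θ) '' Θ) - sInf (F '' Θ)) / t i| + |_ - _| :=
        abs_sub_le _ _ _
    _ < ε / 2 + ε / 2 := by
        refine add_lt_add_of_le_of_lt ?_ hi
        rw [← sub_div, sub_sub_sub_cancel_right, abs_div, abs_of_pos hti, div_le_iff₀ hti]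
        linarith
    _ = ε := add_halves ε

end Danskin

lemma tendsto_nhdsWithin_zero_of_forall_norm_sub_lt {E : Type*} [SeminormedAddCommGroup E]
    {s : Set E} {θ₀ : E} {f : E → ℝ} (hf : ∀ θ, 0 ≤ f θ)
    (h : ∀ ε > 0, ∃ δ > 0, ∀ θ ∈ s, ‖θ - θ₀‖ < δ → f θ < ε) : Tendsto f (𝓝[s] θ₀) (𝓝 0) := by
  refine Metric.tendsto_nhdsWithin_nhds.2 fun ε hε => ?_
  obtain ⟨δ, hδ, hfδ⟩ := h ε hε
  refine ⟨δ, hδ, fun {θ} hθ hθδ => ?_⟩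
  rw [dist_eq_norm] at hθδ
  rw [Real.dist_eq, sub_zero, abs_of_nonneg (hf θ)]
  exact hfδ θ hθ hθδ

lemma tendstoUniformly_uncurry_of_forall_abs_sub_le {α β : Type*} {F : ℕ → α → β → ℝ}
    {f : α → β → ℝ} (h : ∀ ε > 0, ∃ N, ∀ n ≥ N, ∀ x y, |F n x y - f x y| ≤ ε) :
    TendstoUniformly (fun n (p : α × β) => F n p.1 p.2) (fun p => f p.1 p.2) atTop := by
  refine Metric.tendstoUniformly_iff.2 fun ε hε => ?_
  obtain ⟨N, hN⟩ := h (ε / 2) (half_pos hε)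
  filter_upwards [eventually_ge_atTop N] with n hn p
  rw [Real.dist_eq, abs_sub_comm]
  exact (hN n hn p.1 p.2).trans_lt (half_lt_self hε)

section BoundedIntegrands

variable {X : Type*} [MeasurableSpace X] {μ : Measure X}

lemma memLp_top_of_abs_le {f : X → ℝ} {C : ℝ} (hf : AEStronglyMeasurable f μ)
    (hC : ∀ x, |f x| ≤ C) : MemLp f ∞ μ :=
  memLp_top_of_bound hf C (f := f) (.of_forall hC)

variable [IsProbabilityMeasure μ]

lemma sq_integral_le_integral_sq {f : X → ℝ} (hf : MemLp f 2 μ) :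
    (∫ x, f x ∂μ) ^ 2 ≤ ∫ x, f x ^ 2 ∂μ := by
  have := variance_nonneg f μ
  rw [variance_eq_sub hf, sub_nonneg] at this
  simpa using this

lemma sq_integral_mul_le {f g : X → ℝ} {C : ℝ} (hf : AEStronglyMeasurable f μ)
    (hfC : ∀ x, |f x| ≤ C) (hg : MemLp g 2 μ) :
    (∫ x, f x * g x ∂μ) ^ 2 ≤ C ^ 2 * ∫ x, g x ^ 2 ∂μ := by
  have hfg : MemLp (fun x => f x * g x) 2 μ := hg.mul' (memLp_top_of_abs_le hf hfC)
  calc (∫ x, f x * g x ∂μ) ^ 2 ≤ ∫ x, (f x * g x) ^ 2 ∂μ := sq_integral_le_integral_sq hfg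
    _ ≤ ∫ x, C ^ 2 * g x ^ 2 ∂μ := by
        refine integral_mono hfg.integrable_sq (hg.integrable_sq.const_mul _) fun x => ?_
        rw [mul_pow, ← sq_abs (f x)]
        gcongr
        exact hfC x
    _ = C ^ 2 * ∫ x, g x ^ 2 ∂μ := integral_const_mul _ _

lemma abs_integral_le_of_abs_le {f : X → ℝ} {c : ℝ} (hc : ∀ x, |f x| ≤ c) :
    |∫ x, f x ∂μ| ≤ c := by
  simpa using norm_integral_le_of_norm_le_const (μ := μ) (f := f) (.of_forall hc)

lemma continuousOn_integral_mul {E : Type*} [TopologicalSpace E] {s : Set E} {u v : X → E → ℝ}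
    {C : ℝ} (hum : ∀ θ, AEStronglyMeasurable (fun x => u x θ) μ)
    (hvm : ∀ θ, AEStronglyMeasurable (fun x => v x θ) μ) (huC : ∀ x θ, |u x θ| ≤ C)
    (hvC : ∀ x θ, |v x θ| ≤ C)
    (hu : ∀ θ₀ ∈ s, Tendsto (fun θ => ∫ x, (u x θ - u x θ₀) ^ 2 ∂μ) (𝓝[s] θ₀) (𝓝 0))
    (hv : ∀ θ₀ ∈ s, Tendsto (fun θ => ∫ x, (v x θ - v x θ₀) ^ 2 ∂μ) (𝓝[s] θ₀) (𝓝 0)) :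
    ContinuousOn (fun θ => ∫ x, u x θ * v x θ ∂μ) s := by
  intro θ₀ hθ₀
  have hu' θ : MemLp (fun x => u x θ) ∞ μ := memLp_top_of_abs_le (hum θ) (huC · θ)
  have hv' θ : MemLp (fun x => v x θ) ∞ μ := memLp_top_of_abs_le (hvm θ) (hvC · θ)
  have hbound θ : ‖∫ x, u x θ * v x θ ∂μ - ∫ x, u x θ₀ * v x θ₀ ∂μ‖ ≤
      √(C ^ 2 * ∫ x, (v x θ - v x θ₀) ^ 2 ∂μ) + √(C ^ 2 * ∫ x, (u x θ - u x θ₀) ^ 2 ∂μ) := by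
    have hsplit : ∫ x, u x θ * v x θ ∂μ - ∫ x, u x θ₀ * v x θ₀ ∂μ =
        ∫ x, u x θ * (v x θ - v x θ₀) ∂μ + ∫ x, v x θ₀ * (u x θ - u x θ₀) ∂μ := by
      have h₁ : Integrable (fun x => u x θ * (v x θ - v x θ₀)) μ :=
        (((hv' θ).sub (hv' θ₀)).mul' (hu' θ)).integrable le_top
      have h₂ : Integrable (fun x => v x θ₀ * (u x θ - u x θ₀)) μ :=
        (((hu' θ).sub (hu' θ₀)).mul' (hv' θ₀)).integrable le_top
      rw [← integral_sub (((hv' θ).mul' (hu' θ)).integrable le_top)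
          (((hv' θ₀).mul' (hu' θ₀)).integrable le_top), ← integral_add h₁ h₂]
      congr 1
      ext x
      ring
    rw [Real.norm_eq_abs, hsplit]
    refine (abs_add_le _ _).trans (add_le_add (Real.abs_le_sqrt ?_) (Real.abs_le_sqrt ?_))
    · exact sq_integral_mul_le (hum θ) (huC · θ) (((hv' θ).sub (hv' θ₀)).mono_exponent le_top)
    · exact sq_integral_mul_le (hvm θ₀) (hvC · θ₀) (((hu' θ).sub (hu' θ₀)).mono_exponent le_top)
  refine tendsto_iff_norm_sub_tendsto_zero.2 (squeeze_zero (fun _ => norm_nonneg _) hbound ?_)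
  simpa using ((hv θ₀ hθ₀).const_mul (C ^ 2)).sqrt.add ((hu θ₀ hθ₀).const_mul (C ^ 2)).sqrt

lemma tendstoUniformly_integral_add_mul_sq_sub_div {ι E : Type*} {l : Filter ι} {t : ι → ℝ}
    (ht : Tendsto t l (𝓝[≠] 0)) {φ h : X → E → ℝ} {g : ι → X → E → ℝ} {C : ℝ}
    (hφm : ∀ θ, AEStronglyMeasurable (fun x => φ x θ) μ)
    (hhm : ∀ θ, AEStronglyMeasurable (fun x => h x θ) μ)
    (hgm : ∀ i θ, AEStronglyMeasurable (fun x => g i x θ) μ)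
    (hφC : ∀ x θ, |φ x θ| ≤ C) (hhC : ∀ x θ, |h x θ| ≤ C)
    (hg : TendstoUniformly (fun i (p : X × E) => g i p.1 p.2) (fun p => h p.1 p.2) l) :
    TendstoUniformly (fun i θ => (∫ x, (φ x θ + t i * g i x θ) ^ 2 ∂μ - ∫ x, φ x θ ^ 2 ∂μ) / t i)
      (fun θ => 2 * ∫ x, φ x θ * h x θ ∂μ) l := by
  rw [Metric.tendstoUniformly_iff]
  intro ε hε
  obtain ⟨δ, hδ⟩ : ∃ δ, 2 * (|C| + 1) * δ = ε / 2 := ⟨ε / (4 * (|C| + 1)), by field_simp; ring⟩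
  have hδpos : 0 < δ := pos_of_mul_pos_right (hδ ▸ half_pos hε) (by positivity)
  have htsmall : ∀ᶠ i in l, |t i| * (|C| + 1) ^ 2 < ε / 2 := by
    have : Tendsto (fun i => |t i| * (|C| + 1) ^ 2) l (𝓝 0) := by
      simpa using (ht.mono_right nhdsWithin_le_nhds).abs.mul_const ((|C| + 1) ^ 2)
    exact this.eventually (gt_mem_nhds (half_pos hε))
  filter_upwards [ht self_mem_nhdsWithin, htsmall, Metric.tendstoUniformly_iff.1 hg 1 one_pos,
    Metric.tendstoUniformly_iff.1 hg δ hδpos] with i (hti : t i ≠ 0) htε hg₁ hgδ θ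
  have hgh x : |g i x θ - h x θ| ≤ δ := by
    have := hgδ (x, θ)
    rw [Real.dist_eq, abs_sub_comm] at this
    exact this.le
  have hgC x : |g i x θ| ≤ |C| + 1 := by
    have := hg₁ (x, θ)
    rw [Real.dist_eq, abs_sub_comm] at this
    linarith [abs_sub_abs_le_abs_sub (g i x θ) (h x θ), hhC x θ, le_abs_self C]
  have hφ := memLp_top_of_abs_le (hφm θ) (hφC · θ)
  have hh := memLp_top_of_abs_le (hhm θ) (hhC · θ)
  set r := fun x => 2 * φ x θ * (g i x θ - h x θ) + t i * g i x θ ^ 2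
  have hrC x : |r x| ≤ 2 * |C| * δ + |t i| * (|C| + 1) ^ 2 :=
    calc |r x| ≤ |2 * φ x θ * (g i x θ - h x θ)| + |t i * g i x θ ^ 2| := abs_add_le _ _
      _ = 2 * |φ x θ| * |g i x θ - h x θ| + |t i| * |g i x θ| ^ 2 := by
          simp only [abs_mul, abs_pow, abs_two]
      _ ≤ 2 * |C| * δ + |t i| * (|C| + 1) ^ 2 := by
          have h₁ : |φ x θ| * |g i x θ - h x θ| ≤ |C| * δ :=
            mul_le_mul ((hφC x θ).trans (le_abs_self C)) (hgh x) (abs_nonneg _) (abs_nonneg C)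
          have h₂ : |g i x θ| ^ 2 ≤ (|C| + 1) ^ 2 := pow_le_pow_left₀ (abs_nonneg _) (hgC x) 2
          nlinarith [mul_le_mul_of_nonneg_left h₂ (abs_nonneg (t i))]
  have hr : Integrable r μ := Integrable.of_bound (by fun_prop) _ (.of_forall hrC)
  have hexpand : ∫ x, (φ x θ + t i * g i x θ) ^ 2 ∂μ =
      ∫ x, φ x θ ^ 2 ∂μ + t i * (2 * ∫ x, φ x θ * h x θ ∂μ + ∫ x, r x ∂μ) := by
    have hφh : Integrable (fun x => 2 * (φ x θ * h x θ)) μ :=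
      ((hh.mul' hφ).const_mul 2).integrable le_top
    have hsq : (fun x => (φ x θ + t i * g i x θ) ^ 2) =
        fun x => φ x θ ^ 2 + t i * (2 * (φ x θ * h x θ) + r x) := by
      ext x
      simp only [r]
      ring
    have hrest : Integrable (fun x => t i * (2 * (φ x θ * h x θ) + r x)) μ :=
      (hφh.add hr).const_mul _
    rw [hsq, integral_add ((hφ.mono_exponent le_top).integrable_sq) hrest,
      integral_const_mul, integral_add hφh hr, integral_const_mul]
  rw [Real.dist_eq, abs_sub_comm, hexpand, add_sub_cancel_left, mul_div_cancel_left₀ _ hti,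
    add_sub_cancel_left]
  calc |∫ x, r x ∂μ| ≤ 2 * |C| * δ + |t i| * (|C| + 1) ^ 2 := abs_integral_le_of_abs_le hrC
    _ < ε := by nlinarith

end BoundedIntegrands

theorem stmt_6_general
    (d : ℕ) (Θ : Set (EuclideanSpace ℝ (Fin d)))
    (hΘne : Θ.Nonempty) (hΘcomp : IsCompact Θ)
    (ν : Measure ℝ) [IsProbabilityMeasure ν]
    (φ h : ℝ → EuclideanSpace ℝ (Fin d) → ℝ)
    (hφmeas : ∀ θ, Measurable fun x => φ x θ)
    (hhmeas : ∀ θ, Measurable fun x => h x θ)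
    -- φ and h are bounded
    (hφb : ∃ M, ∀ x θ, |φ x θ| ≤ M)
    (hhb : ∃ M, ∀ x θ, |h x θ| ≤ M)
    -- φ and h are L²(ν)-continuous in θ
    (hφc : ∀ θ₀ ∈ Θ, ∀ ε > 0, ∃ δ > 0, ∀ θ ∈ Θ, ‖θ - θ₀‖ < δ →
      ∫ x, (φ x θ - φ x θ₀) ^ 2 ∂ν < ε)
    (hhc : ∀ θ₀ ∈ Θ, ∀ ε > 0, ∃ δ > 0, ∀ θ ∈ Θ, ‖θ - θ₀‖ < δ →
      ∫ x, (h x θ - h x θ₀) ^ 2 ∂ν < ε)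
    -- the argmin set Θ₀(φ)
    (Θ₀ : Set (EuclideanSpace ℝ (Fin d)))
    (hΘ₀def : Θ₀ = {θ ∈ Θ | ∀ ϑ ∈ Θ, ∫ x, (φ x θ) ^ 2 ∂ν ≤ ∫ x, (φ x ϑ) ^ 2 ∂ν})
    -- sequences t_n ↓ 0 and bounded h_n with ‖h_n − h‖∞ → 0
    (t : ℕ → ℝ) (htpos : ∀ n, 0 < t n) (ht0 : Tendsto t atTop (𝓝 0))
    (hn : ℕ → ℝ → EuclideanSpace ℝ (Fin d) → ℝ)
    (hnmeas : ∀ n θ, Measurable fun x => hn n x θ)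
    (hnconv : ∀ ε > 0, ∃ N, ∀ n ≥ N, ∀ x θ, |hn n x θ - h x θ| ≤ ε) :
    Θ₀.Nonempty ∧
    Tendsto
      (fun n =>
        (sInf ((fun θ => ∫ x, (φ x θ + t n * hn n x θ) ^ 2 ∂ν) '' Θ) -
            sInf ((fun θ => ∫ x, (φ x θ) ^ 2 ∂ν) '' Θ)) / t n)
      atTop
      (𝓝 (2 * sInf ((fun θ => ∫ x, φ x θ * h x θ ∂ν) '' Θ₀))) := by
  obtain ⟨Mφ, hMφ⟩ := hφb
  obtain ⟨Mh, hMh⟩ := hhb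
  have hφC x θ : |φ x θ| ≤ max Mφ Mh := (hMφ x θ).trans (le_max_left _ _)
  have hhC x θ : |h x θ| ≤ max Mφ Mh := (hMh x θ).trans (le_max_right _ _)
  have hφm θ := (hφmeas θ).aestronglyMeasurable (μ := ν)
  have hhm θ := (hhmeas θ).aestronglyMeasurable (μ := ν)
  have hφL2 θ₀ hθ₀ := tendsto_nhdsWithin_zero_of_forall_norm_sub_lt
    (fun _ => integral_nonneg fun _ => sq_nonneg _) (hφc θ₀ hθ₀)
  have hhL2 θ₀ hθ₀ := tendsto_nhdsWithin_zero_of_forall_norm_sub_lt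
    (fun _ => integral_nonneg fun _ => sq_nonneg _) (hhc θ₀ hθ₀)
  have hF : ContinuousOn (fun θ => ∫ x, φ x θ ^ 2 ∂ν) Θ := by
    simpa only [sq] using continuousOn_integral_mul hφm hφm hφC hφC hφL2 hφL2
  have hD : ContinuousOn (fun θ => 2 * ∫ x, φ x θ * h x θ ∂ν) Θ :=
    continuousOn_const.mul (continuousOn_integral_mul hφm hhm hφC hhC hφL2 hhL2)
  have ht : Tendsto t atTop (𝓝[>] 0) := tendsto_nhdsWithin_iff.2 ⟨ht0, .of_forall htpos⟩
  have hG := tendstoUniformly_integral_add_mul_sq_sub_div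
    (ht.mono_right (nhdsWithin_mono _ fun _ hs => ne_of_gt hs)) hφm hhm
    (fun n θ => (hnmeas n θ).aestronglyMeasurable) hφC hhC
    (tendstoUniformly_uncurry_of_forall_abs_sub_le hnconv)
  subst hΘ₀def
  obtain ⟨θ₀, hθ₀, hmin⟩ := hΘcomp.exists_isMinOn hΘne hF
  refine ⟨⟨θ₀, hθ₀, hmin⟩, ?_⟩
  have := hΘcomp.tendsto_sInf_image_sub_div hΘne hF hD ht hG.tendstoUniformlyOn
  rwa [Real.sInf_image_const_mul zero_le_two] at this

/-- Lemma 2 of the paper: the first-order Hadamard directional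
derivative of `L(ψ) = inf_{θ∈Θ} ∫ ψ(x,θ)² dν(x)` at `φ` in the direction `h` is
`2 · inf_{θ∈Θ₀(φ)} ∫ φ(x,θ) h(x,θ) dν(x)`, where `Θ₀(φ)` is the (nonempty) argmin set. -/
theorem stmt_6
    (d : ℕ) (Θ : Set (EuclideanSpace ℝ (Fin d)))
    (hΘne : Θ.Nonempty) (hΘcomp : IsCompact Θ)
    (ν : Measure ℝ) [IsProbabilityMeasure ν]
    (φ h : ℝ → EuclideanSpace ℝ (Fin d) → ℝ)
    (hφmeas : ∀ θ, Measurable fun x => φ x θ)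
    (hhmeas : ∀ θ, Measurable fun x => h x θ)
    -- φ and h are bounded
    (hφb : ∃ M, ∀ x θ, |φ x θ| ≤ M)
    (hhb : ∃ M, ∀ x θ, |h x θ| ≤ M)
    -- φ and h are L²(ν)-continuous in θ
    (hφc : ∀ θ₀ ∈ Θ, ∀ ε > 0, ∃ δ > 0, ∀ θ ∈ Θ, ‖θ - θ₀‖ < δ →
      ∫ x, (φ x θ - φ x θ₀) ^ 2 ∂ν < ε)
    (hhc : ∀ θ₀ ∈ Θ, ∀ ε > 0, ∃ δ > 0, ∀ θ ∈ Θ, ‖θ - θ₀‖ < δ →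
      ∫ x, (h x θ - h x θ₀) ^ 2 ∂ν < ε)
    -- the argmin set Θ₀(φ)
    (Θ₀ : Set (EuclideanSpace ℝ (Fin d)))
    (hΘ₀def : Θ₀ = {θ ∈ Θ | ∀ ϑ ∈ Θ, ∫ x, (φ x θ) ^ 2 ∂ν ≤ ∫ x, (φ x ϑ) ^ 2 ∂ν})
    -- sequences t_n ↓ 0 and bounded h_n with ‖h_n − h‖∞ → 0
    (t : ℕ → ℝ) (htpos : ∀ n, 0 < t n) (ht0 : Tendsto t atTop (𝓝 0))
    (hn : ℕ → ℝ → EuclideanSpace ℝ (Fin d) → ℝ)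
    (hnmeas : ∀ n θ, Measurable fun x => hn n x θ)
    (hnb : ∀ n, ∃ M, ∀ x θ, |hn n x θ| ≤ M)
    (hnconv : ∀ ε > 0, ∃ N, ∀ n ≥ N, ∀ x θ, |hn n x θ - h x θ| ≤ ε) :
    Θ₀.Nonempty ∧
    Tendsto
      (fun n =>
        (sInf ((fun θ => ∫ x, (φ x θ + t n * hn n x θ) ^ 2 ∂ν) '' Θ) -
            sInf ((fun θ => ∫ x, (φ x θ) ^ 2 ∂ν) '' Θ)) / t n)
      atTop
      (𝓝 (2 * sInf ((fun θ => ∫ x, φ x θ * h x θ ∂ν) '' Θ₀))) :=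
  stmt_6_general d Θ hΘne hΘcomp ν φ h hφmeas hhmeas hφb hhb hφc hhc Θ₀ hΘ₀def t htpos ht0 hn hnmeas
    hnconv
end

section
/- Assume: Θ ⊂ ℝ^d is nonempty and compact; ν is a Borel probability measure on ℝ; φ : ℝ × Θ → ℝ is bounded and L²(ν)-continuous in θ with L(φ) = inf_{θ∈Θ} ∫ φ(x,θ)² dν(x) = 0; the set Θ₀ = {θ ∈ Θ : ∫ φ(x,θ)² dν(x) = 0} is nonempty and contained in the interior of Θ; and there exist κ ∈ (0,1] and C > 0 such that for all sufficiently small ε > 0, inf over θ ∈ Θ with dist₂(θ,Θ₀) > ε of (∫ φ(x,θ)² dν(x))^{1/2} is at least C·ε^κ. Let h : ℝ × Θ → ℝ be bounded and L²(ν)-continuous in θ with ‖h‖∞ > 0, and set a = (3‖h‖∞/C)^{1/κ}. Then there exists t̄ > 0 such that for every t ∈ (0, t̄]: inf over θ ∈ Θ with dist₂(θ,Θ₀) > a·t of (∫ (φ(x,θ) + t·h(x,θ))² dν(x))^{1/2} is strictly greater than (L(φ + t·h))^{1/2}; consequently L(φ + t·h) equals the infimum of ∫ (φ(x,θ) + t·h(x,θ))²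 dν(x) over θ ∈ Θ with dist₂(θ,Θ₀) ≤ a·t. -/
open MeasureTheory Filter Topology

/-
Outside the `a t`-neighbourhood of `Θ₀` the identification condition gives
`‖φ(·,θ)‖ ≥ C (a t)^κ = 3‖h‖∞ t^κ`, so by the triangle inequality in `L²(ν)`,
`‖φ(·,θ) + t h(·,θ)‖ ≥ 3‖h‖∞ t^κ - t ‖h‖∞ ≥ 2‖h‖∞ t^κ` once `t ≤ 1`.
At any `θ₀ ∈ Θ₀` the same norm is at most `t ‖h‖∞ < 2‖h‖∞ t^κ`, so near-minimisers
of `L(φ + t h)` all lie in the neighbourhood and the infimum may be taken there.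
-/

section L2

variable {α : Type*} [MeasurableSpace α] {μ : Measure α}

lemma sqrt_integral_sq_eq_norm_toLp {f : α → ℝ} (hf : MemLp f 2 μ) :
    Real.sqrt (∫ x, f x ^ 2 ∂μ) = ‖hf.toLp f‖ := by
  have hsq : ‖hf.toLp f‖ ^ 2 = ∫ x, f x ^ 2 ∂μ := by
    rw [← real_inner_self_eq_norm_sq, L2.inner_def]
    refine integral_congr_ae ?_
    filter_upwards [hf.coeFn_toLp] with x hx
    rw [real_inner_self_eq_norm_sq, hx, Real.norm_eq_abs, sq_abs]
  rw [← hsq, Real.sqrt_sq (norm_nonneg _)]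

lemma sqrt_integral_sq_le_of_abs_le [IsProbabilityMeasure μ] {g : α → ℝ} {M : ℝ}
    (hM₀ : 0 ≤ M) (hM : ∀ x, |g x| ≤ M) : Real.sqrt (∫ x, g x ^ 2 ∂μ) ≤ M := by
  have hint : ∫ x, g x ^ 2 ∂μ ≤ M ^ 2 := by
    calc ∫ x, g x ^ 2 ∂μ ≤ ∫ _, M ^ 2 ∂μ :=
          integral_mono_of_nonneg (ae_of_all _ fun x => sq_nonneg _) (integrable_const _)
            (ae_of_all _ fun x => sq_le_sq' (abs_le.1 (hM x)).1 (abs_le.1 (hM x)).2)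
      _ = M ^ 2 := by simp
  calc Real.sqrt (∫ x, g x ^ 2 ∂μ) ≤ Real.sqrt (M ^ 2) := Real.sqrt_le_sqrt hint
    _ = M := Real.sqrt_sq hM₀

lemma abs_sqrt_integral_sq_add_sub_le [IsProbabilityMeasure μ] {f g : α → ℝ} {M : ℝ}
    (hf : MemLp f 2 μ) (hg : AEStronglyMeasurable g μ) (hM₀ : 0 ≤ M)
    (hM : ∀ x, |g x| ≤ M) :
    |Real.sqrt (∫ x, (f x + g x) ^ 2 ∂μ) - Real.sqrt (∫ x, f x ^ 2 ∂μ)| ≤ M := by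
  have hg2 : MemLp g 2 μ := .of_bound hg M (ae_of_all _ hM)
  have hfg := hf.add hg2
  calc |Real.sqrt (∫ x, (f x + g x) ^ 2 ∂μ) - Real.sqrt (∫ x, f x ^ 2 ∂μ)|
      = |‖hf.toLp f + hg2.toLp g‖ - ‖hf.toLp f‖| := by
        rw [← MemLp.toLp_add, ← sqrt_integral_sq_eq_norm_toLp hfg,
          ← sqrt_integral_sq_eq_norm_toLp hf]
        rfl
    _ ≤ ‖hg2.toLp g‖ := by simpa using abs_norm_sub_norm_le (hf.toLp f + hg2.toLp g) (hf.toLp f)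
    _ ≤ M := sqrt_integral_sq_eq_norm_toLp hg2 ▸ sqrt_integral_sq_le_of_abs_le hM₀ hM

end L2

lemma csInf_image_eq_csInf_image_sep {α : Type*} {F : α → ℝ} {s : Set α} {p : α → Prop}
    {c : ℝ} (hs : s.Nonempty) (hbdd : BddBelow (F '' s)) (hlt : sInf (F '' s) < c)
    (hge : ∀ θ ∈ s, ¬ p θ → c ≤ F θ) :
    sInf (F '' s) = sInf (F '' {θ ∈ s | p θ}) := by
  obtain ⟨_, ⟨θ₁, hθ₁, rfl⟩, hθ₁c⟩ := (csInf_lt_iff hbdd (hs.image F)).1 hlt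
  have hp₁ : p θ₁ := by_contra fun hp => (hge θ₁ hθ₁ hp).not_gt hθ₁c
  have hsep_bdd : BddBelow (F '' {θ ∈ s | p θ}) := hbdd.mono (Set.image_mono fun _ h => h.1)
  refine le_antisymm (csInf_le_csInf hbdd ⟨_, θ₁, ⟨hθ₁, hp₁⟩, rfl⟩
    (Set.image_mono fun _ h => h.1)) (le_csInf (hs.image F) ?_)
  rintro _ ⟨θ, hθ, rfl⟩
  by_cases hp : p θ
  · exact csInf_le hsep_bdd ⟨θ, ⟨hθ, hp⟩, rfl⟩
  · calc sInf (F '' {θ ∈ s | p θ}) ≤ F θ₁ := csInf_le hsep_bdd ⟨θ₁, ⟨hθ₁, hp₁⟩, rfl⟩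
      _ ≤ F θ := hθ₁c.le.trans (hge θ hθ hp)

theorem stmt_9_general
    (d : ℕ)
    (Θ : Set (EuclideanSpace ℝ (Fin d)))
    (ν : Measure ℝ) [IsProbabilityMeasure ν]
    (φ : ℝ → EuclideanSpace ℝ (Fin d) → ℝ)
    (hφmeas : ∀ θ, Measurable fun x => φ x θ)
    (hφb : ∃ M, ∀ x θ, |φ x θ| ≤ M)
    -- the identified set Θ₀
    (Θ₀ : Set (EuclideanSpace ℝ (Fin d)))
    (hΘ₀def : Θ₀ = {θ ∈ Θ | ∫ x, (φ x θ) ^ 2 ∂ν = 0})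
    (hΘ₀ne : Θ₀.Nonempty)
    -- partial identification condition with constants κ ∈ (0,1] and C > 0
    (κ C : ℝ) (hκ0 : 0 < κ) (hκ1 : κ ≤ 1) (hC : 0 < C)
    (hident : ∃ ε₀ > 0, ∀ ε : ℝ, 0 < ε → ε ≤ ε₀ → ∀ θ ∈ Θ,
      ε < Metric.infDist θ Θ₀ →
        C * ε ^ κ ≤ Real.sqrt (∫ x, (φ x θ) ^ 2 ∂ν))
    -- the direction h: bounded, L²(ν)-continuous in θ, with ‖h‖∞ > 0
    (h : ℝ → EuclideanSpace ℝ (Fin d) → ℝ)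
    (hhmeas : ∀ θ, Measurable fun x => h x θ)
    (hhb : ∃ M, ∀ x θ, |h x θ| ≤ M)
    (hsup : ℝ) (hsupdef : hsup = ⨆ p : ℝ × Θ, |h p.1 p.2.1|) (hsuppos : 0 < hsup)
    -- a = (3‖h‖∞ / C)^{1/κ}
    (a : ℝ) (hadef : a = (3 * hsup / C) ^ (κ⁻¹)) :
    ∃ tbar > (0 : ℝ), ∀ t : ℝ, 0 < t → t ≤ tbar →
      -- the infimum outside the a·t neighborhood of Θ₀ strictly exceeds √(L(φ+t·h))
      (∃ c : ℝ,
        Real.sqrt (sInf ((fun θ => ∫ x, (φ x θ + t * h x θ) ^ 2 ∂ν) '' Θ)) < c ∧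
        ∀ θ ∈ Θ, a * t < Metric.infDist θ Θ₀ →
          c ≤ Real.sqrt (∫ x, (φ x θ + t * h x θ) ^ 2 ∂ν)) ∧
      -- consequently L(φ+t·h) equals the infimum over the a·t neighborhood of Θ₀
      sInf ((fun θ => ∫ x, (φ x θ + t * h x θ) ^ 2 ∂ν) '' Θ) =
        sInf ((fun θ => ∫ x, (φ x θ + t * h x θ) ^ 2 ∂ν) ''
          {θ ∈ Θ | Metric.infDist θ Θ₀ ≤ a * t}) := by
  obtain ⟨Mφ, hMφ⟩ := hφb
  obtain ⟨Mh, hMh⟩ := hhb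
  obtain ⟨ε₀, hε₀, hid⟩ := hident
  obtain ⟨θ₀, hθ₀Θ, hθ₀⟩ : ∃ θ₀ ∈ Θ, ∫ x, φ x θ₀ ^ 2 ∂ν = 0 := by
    rw [hΘ₀def] at hΘ₀ne
    exact hΘ₀ne
  have hh_le : ∀ x, ∀ θ ∈ Θ, |h x θ| ≤ hsup := fun x θ hθ =>
    hsupdef ▸ le_ciSup (f := fun p : ℝ × Θ => |h p.1 p.2.1|)
      ⟨Mh, by rintro _ ⟨p, rfl⟩; exact hMh _ _⟩ (x, ⟨θ, hθ⟩)
  have ha : 0 < a := hadef ▸ Real.rpow_pos_of_pos (by positivity) _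
  have hCa : C * a ^ κ = 3 * hsup := by
    rw [hadef, Real.rpow_inv_rpow (by positivity) hκ0.ne']
    field_simp
  have hpert : ∀ t, 0 ≤ t → ∀ θ ∈ Θ, |Real.sqrt (∫ x, (φ x θ + t * h x θ) ^ 2 ∂ν) -
      Real.sqrt (∫ x, φ x θ ^ 2 ∂ν)| ≤ t * hsup := fun t ht θ hθ =>
    abs_sqrt_integral_sq_add_sub_le
      (.of_bound (hφmeas θ).aestronglyMeasurable Mφ (ae_of_all _ fun x => hMφ x θ))
      ((hhmeas θ).const_mul t).aestronglyMeasurable (by positivity)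
      fun x => by rw [abs_mul, abs_of_nonneg ht]; gcongr; exact hh_le x θ hθ
  refine ⟨min 1 (ε₀ / a), by positivity, fun t ht htle => ?_⟩
  have hat : a * t ≤ ε₀ := (le_div_iff₀' ha).1 (htle.trans (min_le_right _ _))
  have htκ : t ≤ t ^ κ := Real.self_le_rpow_of_le_one ht.le (htle.trans (min_le_left _ _)) hκ1
  set c := 2 * hsup * t ^ κ
  have hc : 0 < c := by positivity
  set F := fun θ => ∫ x, (φ x θ + t * h x θ) ^ 2 ∂ν
  have hbdd : BddBelow (F '' Θ) :=
    ⟨0, by rintro _ ⟨θ, -, rfl⟩; exact integral_nonneg fun x => sq_nonneg _⟩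
  have hupper : Real.sqrt (sInf (F '' Θ)) < c := by
    have hθ₀F := (abs_le.1 (hpert t ht.le θ₀ hθ₀Θ)).2
    rw [hθ₀, Real.sqrt_zero, sub_zero] at hθ₀F
    calc Real.sqrt (sInf (F '' Θ)) ≤ Real.sqrt (F θ₀) :=
          Real.sqrt_le_sqrt (csInf_le hbdd ⟨θ₀, hθ₀Θ, rfl⟩)
      _ ≤ t * hsup := hθ₀F
      _ < c := by nlinarith [Real.rpow_pos_of_pos ht κ]
  have hlower : ∀ θ ∈ Θ, a * t < Metric.infDist θ Θ₀ → c ≤ Real.sqrt (F θ) := by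
    intro θ hθ hdist
    have hφθ := hid (a * t) (by positivity) hat θ hθ hdist
    rw [Real.mul_rpow ha.le ht.le, ← mul_assoc, hCa] at hφθ
    have := (abs_le.1 (hpert t ht.le θ hθ)).1
    nlinarith
  refine ⟨⟨c, hupper, hlower⟩, csInf_image_eq_csInf_image_sep ⟨θ₀, hθ₀Θ⟩ hbdd
    ((Real.sqrt_lt' hc).1 hupper) fun θ hθ hnear => ?_⟩
  exact (Real.le_sqrt hc.le (integral_nonneg fun x => sq_nonneg _)).1
    (hlower θ hθ (not_le.1 hnear))

/-- localization step in the proof of Lemma 3 of the paper: for all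
small `t > 0`, the infimum defining `L(φ + t·h)` may be restricted to the `a·t`
neighborhood of the identified set `Θ₀`, the infimum outside being strictly larger. -/
theorem stmt_9
    (d : ℕ)
    (Θ : Set (EuclideanSpace ℝ (Fin d))) (hΘne : Θ.Nonempty) (hΘcomp : IsCompact Θ)
    (ν : Measure ℝ) [IsProbabilityMeasure ν]
    (φ : ℝ → EuclideanSpace ℝ (Fin d) → ℝ)
    (hφmeas : ∀ θ, Measurable fun x => φ x θ)
    (hφb : ∃ M, ∀ x θ, |φ x θ| ≤ M)
    (hφc : ∀ θ₀ ∈ Θ, ∀ ε > 0, ∃ δ > 0, ∀ θ ∈ Θ, ‖θ - θ₀‖ < δ →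
      ∫ x, (φ x θ - φ x θ₀) ^ 2 ∂ν < ε)
    -- the null: L(φ) = 0
    (hL0 : sInf ((fun θ => ∫ x, (φ x θ) ^ 2 ∂ν) '' Θ) = 0)
    -- the identified set Θ₀
    (Θ₀ : Set (EuclideanSpace ℝ (Fin d)))
    (hΘ₀def : Θ₀ = {θ ∈ Θ | ∫ x, (φ x θ) ^ 2 ∂ν = 0})
    (hΘ₀ne : Θ₀.Nonempty) (hΘ₀int : Θ₀ ⊆ interior Θ)
    -- partial identification condition with constants κ ∈ (0,1] and C > 0
    (κ C : ℝ) (hκ0 : 0 < κ) (hκ1 : κ ≤ 1) (hC : 0 < C)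
    (hident : ∃ ε₀ > 0, ∀ ε : ℝ, 0 < ε → ε ≤ ε₀ → ∀ θ ∈ Θ,
      ε < Metric.infDist θ Θ₀ →
        C * ε ^ κ ≤ Real.sqrt (∫ x, (φ x θ) ^ 2 ∂ν))
    -- the direction h: bounded, L²(ν)-continuous in θ, with ‖h‖∞ > 0
    (h : ℝ → EuclideanSpace ℝ (Fin d) → ℝ)
    (hhmeas : ∀ θ, Measurable fun x => h x θ)
    (hhb : ∃ M, ∀ x θ, |h x θ| ≤ M)
    (hhc : ∀ θ₀ ∈ Θ, ∀ ε > 0, ∃ δ > 0, ∀ θ ∈ Θ, ‖θ - θ₀‖ < δ →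
      ∫ x, (h x θ - h x θ₀) ^ 2 ∂ν < ε)
    (hsup : ℝ) (hsupdef : hsup = ⨆ p : ℝ × Θ, |h p.1 p.2.1|) (hsuppos : 0 < hsup)
    -- a = (3‖h‖∞ / C)^{1/κ}
    (a : ℝ) (hadef : a = (3 * hsup / C) ^ (κ⁻¹)) :
    ∃ tbar > (0 : ℝ), ∀ t : ℝ, 0 < t → t ≤ tbar →
      -- the infimum outside the a·t neighborhood of Θ₀ strictly exceeds √(L(φ+t·h))
      (∃ c : ℝ,
        Real.sqrt (sInf ((fun θ => ∫ x, (φ x θ + t * h x θ) ^ 2 ∂ν) '' Θ)) < c ∧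
        ∀ θ ∈ Θ, a * t < Metric.infDist θ Θ₀ →
          c ≤ Real.sqrt (∫ x, (φ x θ + t * h x θ) ^ 2 ∂ν)) ∧
      -- consequently L(φ+t·h) equals the infimum over the a·t neighborhood of Θ₀
      sInf ((fun θ => ∫ x, (φ x θ + t * h x θ) ^ 2 ∂ν) '' Θ) =
        sInf ((fun θ => ∫ x, (φ x θ + t * h x θ) ^ 2 ∂ν) ''
          {θ ∈ Θ | Metric.infDist θ Θ₀ ≤ a * t}) :=
  stmt_9_general d Θ ν φ hφmeas hφb Θ₀ hΘ₀def hΘ₀ne κ C hκ0 hκ1 hC hident h hhmeas hhb hsup hsupdef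
    hsuppos a hadef
end

section
/- Let ν be a Borel probability measure on ℝ and Θ ⊆ ℝ^d nonempty and compact. Let φ : ℝ × Θ → ℝ be bounded and L²(ν)-continuous in θ with L(φ) = inf_{θ∈Θ} ∫ φ(x,θ)² dν(x) = 0. Then for all bounded h₁, h₂ : ℝ × Θ → ℝ and all t > 0, | L(φ + t·h₁) − L(φ + t·h₂) | ≤ t² · (‖h₁‖∞ + ‖h₂‖∞) · ‖h₁ − h₂‖∞. -/
/-!
`√L` is `1`-Lipschitz for the sup norm: Minkowski's inequality in `L²(ν)` gives
`√∫ (ψ + g)² ≤ √∫ ψ² + ‖g‖∞` for each `θ`, and this passes to the infimum over `Θ`.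
Under the null this also gives `√L(φ + t hᵢ) ≤ t ‖hᵢ‖∞`, and then
`|L₁ - L₂| = |√L₁ - √L₂| (√L₁ + √L₂) ≤ t ‖h₁ - h₂‖∞ · t (‖h₁‖∞ + ‖h₂‖∞)`.
-/

open MeasureTheory

section SqrtIntegralSq

variable {α : Type*} [MeasurableSpace α] {μ : Measure α} {f g : α → ℝ}

theorem MeasureTheory.MemLp.norm_toLp_two (hf : MemLp f 2 μ) :
    ‖hf.toLp f‖ = √(∫ x, f x ^ 2 ∂μ) := by
  rw [← Real.sqrt_sq (norm_nonneg _), ← real_inner_self_eq_norm_sq, L2.inner_def]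
  refine congrArg Real.sqrt (integral_congr_ae ?_)
  filter_upwards [hf.coeFn_toLp] with x hx
  simp [hx, sq]

theorem sqrt_integral_sq_add_le (hf : MemLp f 2 μ) (hg : MemLp g 2 μ) :
    √(∫ x, (f x + g x) ^ 2 ∂μ) ≤ √(∫ x, f x ^ 2 ∂μ) + √(∫ x, g x ^ 2 ∂μ) := by
  calc √(∫ x, (f x + g x) ^ 2 ∂μ) = ‖(hf.add hg).toLp (f + g)‖ :=
        (hf.add hg).norm_toLp_two.symm
    _ = ‖hf.toLp f + hg.toLp g‖ := by rw [MemLp.toLp_add]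
    _ ≤ ‖hf.toLp f‖ + ‖hg.toLp g‖ := norm_add_le _ _
    _ = √(∫ x, f x ^ 2 ∂μ) + √(∫ x, g x ^ 2 ∂μ) := by rw [hf.norm_toLp_two, hg.norm_toLp_two]

theorem sqrt_integral_sq_le_of_abs_le_s14 [IsProbabilityMeasure μ] {C : ℝ} (hC : ∀ x, |g x| ≤ C) :
    √(∫ x, g x ^ 2 ∂μ) ≤ C := by
  have hC₀ : 0 ≤ C := (abs_nonneg _).trans (hC (nonempty_of_isProbabilityMeasure μ).some)
  refine Real.sqrt_le_iff.2 ⟨hC₀, ?_⟩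
  calc ∫ x, g x ^ 2 ∂μ ≤ ∫ _, C ^ 2 ∂μ :=
        integral_mono_of_nonneg (.of_forall fun x => sq_nonneg _) (integrable_const _)
          (.of_forall fun x => sq_le_sq' (abs_le.1 (hC x)).1 (abs_le.1 (hC x)).2)
    _ = C ^ 2 := by simp

theorem sqrt_integral_sq_add_le_of_abs_le [IsProbabilityMeasure μ] (hf : MemLp f 2 μ)
    (hg : AEStronglyMeasurable g μ) {C : ℝ} (hC : ∀ x, |g x| ≤ C) :
    √(∫ x, (f x + g x) ^ 2 ∂μ) ≤ √(∫ x, f x ^ 2 ∂μ) + C :=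
  (sqrt_integral_sq_add_le hf (.of_bound hg C (.of_forall hC))).trans
    (add_le_add le_rfl (sqrt_integral_sq_le_of_abs_le_s14 hC))

end SqrtIntegralSq

section Infimum

variable {ι : Type*} {s : Set ι}

theorem Real.sqrt_csInf_image (hs : s.Nonempty) {F : ι → ℝ} (hF : BddBelow (F '' s)) :
    √(sInf (F '' s)) = sInf ((fun i => √(F i)) '' s) := by
  rw [Monotone.map_csInf_of_continuousAt Real.continuous_sqrt.continuousAt
    (fun _ _ => Real.sqrt_le_sqrt) (hs.image F) hF, Set.image_image]

theorem csInf_image_le_csInf_image_add (hs : s.Nonempty) {F G : ι → ℝ} (hF : BddBelow (F '' s))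
    {c : ℝ} (h : ∀ i ∈ s, F i ≤ G i + c) : sInf (F '' s) ≤ sInf (G '' s) + c := by
  refine sub_le_iff_le_add.1 (le_csInf (hs.image G) ?_)
  rintro _ ⟨i, hi, rfl⟩
  linarith [csInf_le hF ⟨i, hi, rfl⟩, h i hi]

theorem sqrt_csInf_image_le_add (hs : s.Nonempty) {F G : ι → ℝ} (hF : ∀ i, 0 ≤ F i)
    (hG : ∀ i, 0 ≤ G i) {c : ℝ} (h : ∀ i ∈ s, √(F i) ≤ √(G i) + c) :
    √(sInf (F '' s)) ≤ √(sInf (G '' s)) + c := by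
  have bdd : ∀ H : ι → ℝ, (∀ i, 0 ≤ H i) → BddBelow (H '' s) := by
    rintro H hH
    exact ⟨0, by rintro _ ⟨i, -, rfl⟩; exact hH i⟩
  rw [Real.sqrt_csInf_image hs (bdd F hF), Real.sqrt_csInf_image hs (bdd G hG)]
  exact csInf_image_le_csInf_image_add hs (bdd _ fun i => Real.sqrt_nonneg _) h

end Infimum

theorem abs_sub_le_mul_of_sqrt_le {a b e p q : ℝ} (ha : 0 ≤ a) (hb : 0 ≤ b)
    (hab : √a ≤ √b + e) (hba : √b ≤ √a + e) (hap : √a ≤ p) (hbq : √b ≤ q) :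
    |a - b| ≤ e * (p + q) := by
  have hsum : 0 ≤ √a + √b := by positivity
  calc |a - b| = |√a - √b| * (√a + √b) := by
        rw [← abs_of_nonneg hsum, ← abs_mul]
        congr 1
        ring_nf
        rw [Real.sq_sqrt ha, Real.sq_sqrt hb]
    _ ≤ e * (p + q) :=
        mul_le_mul (abs_sub_le_iff.2 ⟨by linarith, by linarith⟩) (by linarith) hsum
          (by linarith [Real.sqrt_nonneg a])

section SqLoss

variable {α ι : Type*} [MeasurableSpace α] {μ : Measure α} {s : Set ι}

/-- The paper's `L`. -/
noncomputable def sqLoss (μ : Measure α) (s : Set ι) (ψ : α → ι → ℝ) : ℝ :=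
  sInf ((fun i => ∫ x, ψ x i ^ 2 ∂μ) '' s)

theorem sqLoss_nonneg (μ : Measure α) (s : Set ι) (ψ : α → ι → ℝ) : 0 ≤ sqLoss μ s ψ :=
  Real.sInf_nonneg <| by
    rintro _ ⟨i, -, rfl⟩
    exact integral_nonneg fun _ => sq_nonneg _

theorem sqrt_sqLoss_le_add [IsProbabilityMeasure μ] (hs : s.Nonempty) {ψ₁ ψ₂ : α → ι → ℝ}
    (hψ₁ : ∀ i, MemLp (ψ₁ · i) 2 μ) (hψ₂ : ∀ i, MemLp (ψ₂ · i) 2 μ)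
    {c : ℝ} (hc : ∀ x i, |ψ₁ x i - ψ₂ x i| ≤ c) :
    √(sqLoss μ s ψ₁) ≤ √(sqLoss μ s ψ₂) + c :=
  sqrt_csInf_image_le_add hs (fun _ => integral_nonneg fun _ => sq_nonneg _)
    (fun _ => integral_nonneg fun _ => sq_nonneg _) fun i _ => by
      simpa using sqrt_integral_sq_add_le_of_abs_le (hψ₂ i) ((hψ₁ i).1.sub (hψ₂ i).1) (hc · i)

end SqLoss

theorem stmt_14_general
    (d : ℕ) (Θ : Set (EuclideanSpace ℝ (Fin d)))
    (hΘne : Θ.Nonempty)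
    (ν : Measure ℝ) [IsProbabilityMeasure ν]
    (φ : ℝ → EuclideanSpace ℝ (Fin d) → ℝ)
    (hφmeas : ∀ θ, Measurable fun x => φ x θ)
    (hφb : ∃ M, ∀ x θ, |φ x θ| ≤ M)
    -- the null: L(φ) = 0
    (hL0 : sInf ((fun θ => ∫ x, (φ x θ) ^ 2 ∂ν) '' Θ) = 0)
    (h₁ h₂ : ℝ → EuclideanSpace ℝ (Fin d) → ℝ)
    (hmeas₁ : ∀ θ, Measurable fun x => h₁ x θ)
    (hmeas₂ : ∀ θ, Measurable fun x => h₂ x θ)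
    -- bounds playing the role of ‖h₁‖∞, ‖h₂‖∞ and ‖h₁ − h₂‖∞
    (C₁ C₂ Cd : ℝ)
    (hb₁ : ∀ x θ, |h₁ x θ| ≤ C₁)
    (hb₂ : ∀ x θ, |h₂ x θ| ≤ C₂)
    (hbd : ∀ x θ, |h₁ x θ - h₂ x θ| ≤ Cd)
    (t : ℝ) (ht : 0 < t) :
    |sInf ((fun θ => ∫ x, (φ x θ + t * h₁ x θ) ^ 2 ∂ν) '' Θ) -
        sInf ((fun θ => ∫ x, (φ x θ + t * h₂ x θ) ^ 2 ∂ν) '' Θ)| ≤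
      t ^ 2 * (C₁ + C₂) * Cd := by
  obtain ⟨M, hM⟩ := hφb
  have scale {u C : ℝ} (hu : |u| ≤ C) : |t * u| ≤ t * C := by
    rw [abs_mul, abs_of_pos ht]; exact mul_le_mul_of_nonneg_left hu ht.le
  have hφL2 (θ) : MemLp (φ · θ) 2 ν :=
    .of_bound (hφmeas θ).aestronglyMeasurable M (.of_forall (hM · θ))
  have perturb_memLp {h : ℝ → EuclideanSpace ℝ (Fin d) → ℝ} (hm : ∀ θ, Measurable (h · θ))
      {C : ℝ} (hb : ∀ x θ, |h x θ| ≤ C) (θ) : MemLp (fun x => φ x θ + t * h x θ) 2 ν :=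
    (hφL2 θ).add
      ((MemLp.of_bound (hm θ).aestronglyMeasurable C (.of_forall (hb · θ))).const_mul t)
  have null_bound {h : ℝ → EuclideanSpace ℝ (Fin d) → ℝ} (hm : ∀ θ, Measurable (h · θ))
      {C : ℝ} (hb : ∀ x θ, |h x θ| ≤ C) :
      √(sqLoss ν Θ fun x θ => φ x θ + t * h x θ) ≤ t * C := by
    have := sqrt_sqLoss_le_add hΘne (perturb_memLp hm hb) hφL2 fun x θ => by
      rw [add_sub_cancel_left]; exact scale (hb x θ)
    rwa [show sqLoss ν Θ φ = 0 from hL0, Real.sqrt_zero, zero_add] at this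
  have compare {h h' : ℝ → EuclideanSpace ℝ (Fin d) → ℝ} (hm : ∀ θ, Measurable (h · θ))
      (hm' : ∀ θ, Measurable (h' · θ)) {C C' : ℝ} (hb : ∀ x θ, |h x θ| ≤ C)
      (hb' : ∀ x θ, |h' x θ| ≤ C') (hbd : ∀ x θ, |h x θ - h' x θ| ≤ Cd) :
      √(sqLoss ν Θ fun x θ => φ x θ + t * h x θ) ≤
        √(sqLoss ν Θ fun x θ => φ x θ + t * h' x θ) + t * Cd :=
    sqrt_sqLoss_le_add hΘne (perturb_memLp hm hb) (perturb_memLp hm' hb') fun x θ => by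
      rw [add_sub_add_left_eq_sub, ← mul_sub]; exact scale (hbd x θ)
  calc _ ≤ t * Cd * (t * C₁ + t * C₂) :=
        abs_sub_le_mul_of_sqrt_le (sqLoss_nonneg _ _ _) (sqLoss_nonneg _ _ _)
          (compare hmeas₁ hmeas₂ hb₁ hb₂ hbd)
          (compare hmeas₂ hmeas₁ hb₂ hb₁ fun x θ => by rw [abs_sub_comm]; exact hbd x θ)
          (null_bound hmeas₁ hb₁) (null_bound hmeas₂ hb₂)
    _ = t ^ 2 * (C₁ + C₂) * Cd := by ring

/-- quadratic comparison under the null. If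
`L(φ) = inf_{θ∈Θ} ∫ φ(x,θ)² dν(x) = 0`, then for bounded directions `h₁, h₂` and `t > 0`,
`|L(φ + t·h₁) − L(φ + t·h₂)| ≤ t²(‖h₁‖∞ + ‖h₂‖∞)‖h₁ − h₂‖∞`. -/
theorem stmt_14
    (d : ℕ) (Θ : Set (EuclideanSpace ℝ (Fin d)))
    (hΘne : Θ.Nonempty) (hΘcomp : IsCompact Θ)
    (ν : Measure ℝ) [IsProbabilityMeasure ν]
    (φ : ℝ → EuclideanSpace ℝ (Fin d) → ℝ)
    (hφmeas : ∀ θ, Measurable fun x => φ x θ)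
    (hφb : ∃ M, ∀ x θ, |φ x θ| ≤ M)
    (hφc : ∀ θ₀ ∈ Θ, ∀ ε > 0, ∃ δ > 0, ∀ θ ∈ Θ, ‖θ - θ₀‖ < δ →
      ∫ x, (φ x θ - φ x θ₀) ^ 2 ∂ν < ε)
    -- the null: L(φ) = 0
    (hL0 : sInf ((fun θ => ∫ x, (φ x θ) ^ 2 ∂ν) '' Θ) = 0)
    (h₁ h₂ : ℝ → EuclideanSpace ℝ (Fin d) → ℝ)
    (hmeas₁ : ∀ θ, Measurable fun x => h₁ x θ)
    (hmeas₂ : ∀ θ, Measurable fun x => h₂ x θ)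
    -- bounds playing the role of ‖h₁‖∞, ‖h₂‖∞ and ‖h₁ − h₂‖∞
    (C₁ C₂ Cd : ℝ)
    (hb₁ : ∀ x θ, |h₁ x θ| ≤ C₁)
    (hb₂ : ∀ x θ, |h₂ x θ| ≤ C₂)
    (hbd : ∀ x θ, |h₁ x θ - h₂ x θ| ≤ Cd)
    (t : ℝ) (ht : 0 < t) :
    |sInf ((fun θ => ∫ x, (φ x θ + t * h₁ x θ) ^ 2 ∂ν) '' Θ) -
        sInf ((fun θ => ∫ x, (φ x θ + t * h₂ x θ) ^ 2 ∂ν) '' Θ)| ≤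
      t ^ 2 * (C₁ + C₂) * Cd :=
  stmt_14_general d Θ hΘne ν φ hφmeas hφb hL0 h₁ h₂ hmeas₁ hmeas₂ C₁ C₂ Cd hb₁ hb₂ hbd t ht
end
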